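/- arXiv:0910.5863 — 5 statements merged into one kernel-verified Lean document; each statement's English description precedes it below -/
import Mathlib

section
/- Let W̃ be a finite-dimensional real vector space equipped with a symmetric positive definite bilinear form a, let Ŵ be a subspace of W̃ with {0} ≠ Ŵ and Ŵ ≠ W̃, and let Q : W̃ → W̃ be a linear map with range contained in Ŵ и such that Q u = u for every u ∈ Ŵ (so Q is a projection of W̃ onto Ŵ). For every u ∈ Ŵ there is a unique w ∈ W̃ such that a(w, z) = a(u, Q z) for all z ∈ W̃; define the preconditioned BDDC operator T : Ŵ → Ŵ by T u = Q w. Then every (real) eigenvalue λ of T satisfies 1 ≤ λ ≤ ω, where ω = sup { a(w − Q w, w − Q w) / a(w, w) : w ∈ W̃, w ≠ 0 }. -/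
/-!
Let `T u = λ u` with `u ∈ Ŵ`, `u ≠ 0`, and let `w` solve `a(w, z) = a(u, Q z)`, so that `Q w = λ u`.
Testing with `z = u` and `z = w` gives `a(w, u) = a(u, u)` and `a(w, w) = λ a(u, u)`, and
Cauchy–Schwarz yields `λ ≥ 1`. If `λ > 1`, the vector `v = w - u` has `a(v, v) = (λ - 1) a(u, u)`
and `v - Q v = w - λ u` has energy `λ (λ - 1) a(u, u)`, so `λ` is itself one of the ratios whose
supremum is `ω`. If `λ = 1`, any nonzero `x = v - Q v` (one exists as `Q ≠ id`) satisfies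
`x - Q x = x`, so `1` is one of these ratios. The ratios are bounded above because `a` is the inner
product of a finite-dimensional Euclidean space.
-/

open LinearMap (BilinForm)

namespace LinearMap.BilinForm

theorem nondegenerate_of_pos {R M : Type*} [CommRing R] [Preorder R] [AddCommGroup M]
    [Module R M] {B : BilinForm R M} (hB : ∀ x, x ≠ 0 → 0 < B x x) : B.Nondegenerate :=
  ⟨fun x hx => by_contra fun h => (hB x h).ne' (hx x),
    fun y hy => by_contra fun h => (hB y h).ne' (hy y)⟩

theorem existsUnique_apply_eq {K V : Type*} [Field K] [AddCommGroup V] [Module K V]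
    [FiniteDimensional K V] {B : BilinForm K V} (hB : B.Nondegenerate) (f : Module.Dual K V) :
    ∃! w, ∀ z, B w z = f z := by
  simpa only [LinearMap.ext_iff, toDual_def] using (B.toDual hB).bijective.existsUnique f

variable {W : Type*} [AddCommGroup W] [Module ℝ W]

theorem apply_self_nonneg_of_pos {a : BilinForm ℝ W} (hpos : ∀ u, u ≠ 0 → 0 < a u u) (u : W) :
    0 ≤ a u u := by
  rcases eq_or_ne u 0 with rfl | hu
  · simp
  · exact (hpos u hu).le

abbrev toInnerProductSpaceCore (a : BilinForm ℝ W) (hsymm : ∀ u v, a u v = a v u)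
    (hpos : ∀ u, u ≠ 0 → 0 < a u u) : InnerProductSpace.Core ℝ W where
  inner u v := a u v
  conj_inner_symm u v := hsymm v u
  re_inner_nonneg := apply_self_nonneg_of_pos hpos
  definite u hu := by_contra fun h => (hpos u h).ne' hu
  add_left u v w := by simp
  smul_left u v r := by simp

def energyRatios (a : BilinForm ℝ W) (f : W →ₗ[ℝ] W) : Set ℝ :=
  {r | ∃ w : W, w ≠ 0 ∧ r = a (f w) (f w) / a w w}

theorem bddAbove_energyRatios [FiniteDimensional ℝ W] {a : BilinForm ℝ W}
    (hsymm : ∀ u v, a u v = a v u) (hpos : ∀ u, u ≠ 0 → 0 < a u u) (f : W →ₗ[ℝ] W) :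
    BddAbove (energyRatios a f) := by
  let core := a.toInnerProductSpaceCore hsymm hpos
  let _ : NormedAddCommGroup W := core.toNormedAddCommGroup
  let _ : InnerProductSpace ℝ W := InnerProductSpace.ofCore core.toCore
  have hnorm (x : W) : a x x = ‖x‖ ^ 2 := real_inner_self_eq_norm_sq x
  let F := LinearMap.toContinuousLinearMap f
  refine ⟨‖F‖ ^ 2, ?_⟩
  rintro _ ⟨w, hw, rfl⟩
  rw [hnorm, hnorm, div_le_iff₀ (by positivity)]
  calc ‖f w‖ ^ 2 ≤ (‖F‖ * ‖w‖) ^ 2 := pow_le_pow_left₀ (norm_nonneg _) (F.le_opNorm w) 2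
    _ = ‖F‖ ^ 2 * ‖w‖ ^ 2 := mul_pow _ _ _

theorem one_mem_energyRatios {a : BilinForm ℝ W} (hpos : ∀ u, u ≠ 0 → 0 < a u u)
    {Q : W →ₗ[ℝ] W} (hQ : IsIdempotentElem Q) (hQid : Q ≠ LinearMap.id) :
    1 ∈ energyRatios a (LinearMap.id - Q) := by
  obtain ⟨v, hv⟩ : ∃ v, Q v ≠ v := by
    by_contra! h
    exact hQid (LinearMap.ext h)
  set x := v - Q v
  have hx : x ≠ 0 := sub_ne_zero.mpr hv.symm
  have hQx : Q x = 0 := by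
    simp only [x, map_sub, sub_eq_zero]
    exact (LinearMap.ext_iff.mp hQ v).symm
  refine ⟨x, hx, ?_⟩
  simp only [LinearMap.sub_apply, LinearMap.id_apply, hQx, sub_zero]
  exact (div_self (hpos x hx).ne').symm

end LinearMap.BilinForm

namespace BDDC

variable {W : Type*} [AddCommGroup W] [Module ℝ W] {a : BilinForm ℝ W} {Q : W →ₗ[ℝ] W}
  {u w : W} {lam : ℝ}

theorem apply_left_eq (hw : ∀ z, a w z = a u (Q z)) (hQu : Q u = u) : a w u = a u u := by
  rw [hw, hQu]

theorem apply_self_eq (hw : ∀ z, a w z = a u (Q z)) (hQw : Q w = lam • u) :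
    a w w = lam * a u u := by
  rw [hw, hQw, map_smul, smul_eq_mul]

theorem one_le_of_eigen (hsymm : ∀ u v, a u v = a v u) (hnonneg : ∀ x, 0 ≤ a x x)
    (hu : 0 < a u u) (hw : ∀ z, a w z = a u (Q z)) (hQu : Q u = u) (hQw : Q w = lam • u) :
    1 ≤ lam := by
  have hcs := a.apply_mul_apply_le_of_forall_zero_le hnonneg w u
  rw [← hsymm w u, apply_left_eq hw hQu, apply_self_eq hw hQw] at hcs
  exact (le_mul_iff_one_le_left hu).mp (le_of_mul_le_mul_right hcs hu)

theorem mem_energyRatios_of_eigen (hsymm : ∀ u v, a u v = a v u) (hu : 0 < a u u)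
    (hw : ∀ z, a w z = a u (Q z)) (hQu : Q u = u) (hQw : Q w = lam • u) (hlam : 1 < lam) :
    lam ∈ a.energyRatios (LinearMap.id - Q) := by
  have hwu := apply_left_eq hw hQu
  have hww := apply_self_eq hw hQw
  have huw : a u w = a u u := (hsymm u w).trans hwu
  have hvv : a (w - u) (w - u) = (lam - 1) * a u u := by
    simp only [map_sub, LinearMap.sub_apply, huw, hwu, hww]
    ring
  have hvv_pos : 0 < a (w - u) (w - u) := hvv ▸ mul_pos (sub_pos.mpr hlam) hu
  have hQv : (w - u) - Q (w - u) = w - lam • u := by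
    rw [map_sub, hQw, hQu]
    abel
  refine ⟨w - u, fun h => by simp [h] at hvv_pos, ?_⟩
  rw [eq_div_iff hvv_pos.ne']
  change lam * _ = a ((w - u) - Q (w - u)) ((w - u) - Q (w - u))
  rw [hQv, hvv]
  simp only [map_sub, map_smul, LinearMap.sub_apply, LinearMap.smul_apply, smul_eq_mul,
    huw, hwu, hww]
  ring

end BDDC

open LinearMap.BilinForm BDDC

theorem stmt_0_general {W : Type*} [AddCommGroup W] [Module ℝ W] [FiniteDimensional ℝ W]
    (a : W →ₗ[ℝ] W →ₗ[ℝ] ℝ)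
    (hasymm : ∀ u v : W, a u v = a v u)
    (hapos : ∀ u : W, u ≠ 0 → 0 < a u u)
    (What : Submodule ℝ W) (hWtop : What ≠ ⊤)
    (Q : W →ₗ[ℝ] W)
    (hQrange : ∀ v : W, Q v ∈ What)
    (hQfix : ∀ u ∈ What, Q u = u) :
    (∀ u ∈ What, ∃! w : W, ∀ z : W, a w z = a u (Q z)) ∧
    ∀ T : W →ₗ[ℝ] W,
      (∀ u ∈ What, ∀ w : W, (∀ z : W, a w z = a u (Q z)) → T u = Q w) →
      ∀ (lam : ℝ) (u : W), u ∈ What → u ≠ 0 → T u = lam • u →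
        1 ≤ lam ∧
        lam ≤ sSup {r : ℝ | ∃ w : W, w ≠ 0 ∧ r = a (w - Q w) (w - Q w) / a w w} := by
  have hsolve (u : W) := existsUnique_apply_eq (nondegenerate_of_pos hapos) ((a u).comp Q)
  refine ⟨fun u _ => hsolve u, fun T hT lam u hu hu0 heig => ?_⟩
  obtain ⟨w, hw, -⟩ := hsolve u
  have hQw : Q w = lam • u := by rw [← hT u hu w hw, heig]
  have hlam := one_le_of_eigen hasymm (apply_self_nonneg_of_pos hapos) (hapos u hu0) hw
    (hQfix u hu) hQw
  have hbdd := bddAbove_energyRatios hasymm hapos (LinearMap.id - Q)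
  refine ⟨hlam, ?_⟩
  rcases hlam.lt_or_eq with hlt | rfl
  · exact le_csSup hbdd (mem_energyRatios_of_eigen hasymm (hapos u hu0) hw (hQfix u hu) hQw hlt)
  · have hQ : IsIdempotentElem Q := LinearMap.ext fun v => hQfix _ (hQrange v)
    have hQid : Q ≠ LinearMap.id := fun h => hWtop (eq_top_iff.2 fun v _ => by simpa [h] using hQrange v)
    exact le_csSup hbdd (one_mem_energyRatios hapos hQ hQid)

/-- Abstract BDDC condition number bound (Theorem 1): the eigenvalues of the
preconditioned BDDC operator `T u = Q w`, where `a (w, z) = a (u, Q z)` for all `z`,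
satisfy `1 ≤ λ ≤ ω` with `ω = sup { a(w - Qw, w - Qw) / a(w,w) : w ≠ 0 }`. -/
theorem stmt_0 {W : Type*} [AddCommGroup W] [Module ℝ W] [FiniteDimensional ℝ W]
    (a : W →ₗ[ℝ] W →ₗ[ℝ] ℝ)
    (hasymm : ∀ u v : W, a u v = a v u)
    (hapos : ∀ u : W, u ≠ 0 → 0 < a u u)
    (What : Submodule ℝ W) (hWbot : What ≠ ⊥) (hWtop : What ≠ ⊤)
    (Q : W →ₗ[ℝ] W)
    (hQrange : ∀ v : W, Q v ∈ What)
    (hQfix : ∀ u ∈ What, Q u = u) :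
    (∀ u ∈ What, ∃! w : W, ∀ z : W, a w z = a u (Q z)) ∧
    ∀ T : W →ₗ[ℝ] W,
      (∀ u ∈ What, ∀ w : W, (∀ z : W, a w z = a u (Q z)) → T u = Q w) →
      ∀ (lam : ℝ) (u : W), u ∈ What → u ≠ 0 → T u = lam • u →
        1 ≤ lam ∧
        lam ≤ sSup {r : ℝ | ∃ w : W, w ≠ 0 ∧ r = a (w - Q w) (w - Q w) / a w w} :=
  stmt_0_general a hasymm hapos What hWtop Q hQrange hQfix
end

section
/- Let W be a finite-dimensional real vector space, let A be a symmetric bilinear form on W, and let U_I ⊆ U ⊆ W be subspaces. Let P : W → W be a linear map whose range is contained in U_I and which satisfies A(v − P v, z) = 0 for all v ∈ W and all z ∈ U_I, and let E : W → W be a linear map with E u = u for all u ∈ U. Let w₀ ∈ W satisfy P w₀ = 0. Then the linear functional L(w) := A( w₀ − (I−P)E w₀ , w − (I−P)E w ) vanishes on U, i.e. L(w) = 0 for every w ∈ U. -/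
/-!
For `w ∈ U` we have `E w = w`, so `w - (I - P) E w = P w ∈ U_I`. Since `P w₀ = 0`,
`w₀ - (I - P) E w₀ = (I - P)(w₀ - E w₀)`, which is `A`-orthogonal to `U_I`.
-/

section

variable {R M : Type*} [Semiring R] [AddCommGroup M] [Module R M]

theorem sub_sub_map_sub_eq_map_of_apply_eq_self {E P : M →ₗ[R] M} {u : M} (hu : E u = u) :
    u - (E u - P (E u)) = P u := by
  rw [hu]
  abel

theorem sub_sub_map_sub_eq_sub_map_sub_of_map_eq_zero (E : M →ₗ[R] M) {P : M →ₗ[R] M} {v : M}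
    (hv : P v = 0) : v - (E v - P (E v)) = (v - E v) - P (v - E v) := by
  rw [map_sub, hv]
  abel

end

theorem stmt_9_general {W : Type*} [AddCommGroup W] [Module ℝ W]
    (A : W →ₗ[ℝ] W →ₗ[ℝ] ℝ)
    (UI U : Submodule ℝ W)
    (P : W →ₗ[ℝ] W) (hPrange : ∀ v : W, P v ∈ UI)
    (hPorth : ∀ v : W, ∀ z ∈ UI, A (v - P v) z = 0)
    (E : W →ₗ[ℝ] W) (hEfix : ∀ u ∈ U, E u = u)
    (w₀ : W) (hw₀ : P w₀ = 0) :
    ∀ w ∈ U, A (w₀ - (E w₀ - P (E w₀))) (w - (E w - P (E w))) = 0 := by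
  intro w hw
  rw [sub_sub_map_sub_eq_sub_map_sub_of_map_eq_zero E hw₀,
    sub_sub_map_sub_eq_map_of_apply_eq_self (hEfix w hw)]
  exact hPorth _ _ (hPrange w)

/-- Lemma 5: the adaptively generated constraint functional
`L(w) = A(w₀ - (I-P)E w₀, w - (I-P)E w)`, built from a discrete harmonic
vector `w₀` (i.e. `P w₀ = 0`), vanishes on the subspace `U` of continuous
functions. -/
theorem stmt_9 {W : Type*} [AddCommGroup W] [Module ℝ W] [FiniteDimensional ℝ W]
    (A : W →ₗ[ℝ] W →ₗ[ℝ] ℝ)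
    (hAsymm : ∀ u v : W, A u v = A v u)
    (UI U : Submodule ℝ W) (hUIU : UI ≤ U)
    (P : W →ₗ[ℝ] W) (hPrange : ∀ v : W, P v ∈ UI)
    (hPorth : ∀ v : W, ∀ z ∈ UI, A (v - P v) z = 0)
    (E : W →ₗ[ℝ] W) (hEfix : ∀ u ∈ U, E u = u)
    (w₀ : W) (hw₀ : P w₀ = 0) :
    ∀ w ∈ U, A (w₀ - (E w₀ - P (E w₀))) (w - (E w - P (E w))) = 0 :=
  stmt_9_general A UI U P hPrange hPorth E hEfix w₀ hw₀
end

section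
/- Let A, P, E, Π be n×n real matrices such that A is symmetric positive semidefinite, Π is symmetric with Π² = Π, P Π = 0, and for every x ∈ ℝⁿ, A Π x = 0 implies (I − E) Π x = 0. Define S = (I − P)ᵀ A (I − P). Then for every x ∈ ℝⁿ, Π S Π x = 0 implies Π (I − E)ᵀ S (I − E) Π x = 0; that is, the nullspace of Π S Π is contained in the nullspace of Π (I − E)ᵀ S (I − E) Π. -/
open Matrix

/-! Since `P Π = 0`, the matrix `Π S Π` is the Gram-type product `Πᵀ A Π`; for semidefinite `A`
its kernel is that of `A Π`, on which `(I - E) Π` vanishes by assumption. -/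

namespace Matrix

open scoped ComplexOrder in
theorem PosSemidef.mulVec_mulVec_eq_zero_of_conjTranspose_mul_mul_mulVec_eq_zero
    {𝕜 m n : Type*} [RCLike 𝕜] [Fintype m] [Fintype n] {A : Matrix n n 𝕜} (hA : A.PosSemidef)
    {B : Matrix n m 𝕜} {x : m → 𝕜} (h : (Bᴴ * A * B) *ᵥ x = 0) : A *ᵥ (B *ᵥ x) = 0 := by
  refine (hA.dotProduct_mulVec_zero_iff _).mp ?_
  calc star (B *ᵥ x) ⬝ᵥ A *ᵥ (B *ᵥ x) = star x ⬝ᵥ (Bᴴ * A * B) *ᵥ x := by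
        simp only [star_mulVec, dotProduct_mulVec, vecMul_vecMul, Matrix.mul_assoc]
    _ = 0 := by rw [h, dotProduct_zero]

theorem transpose_mul_congr_one_sub_mul_of_mul_eq_zero {R n : Type*} [CommRing R] [Fintype n]
    [DecidableEq n] {P Q : Matrix n n R} (A : Matrix n n R) (hPQ : P * Q = 0) :
    Qᵀ * ((1 - P)ᵀ * A * (1 - P)) * Q = Qᵀ * A * Q := by
  have hQ : (1 - P) * Q = Q := by rw [sub_mul, one_mul, hPQ, sub_zero]
  calc Qᵀ * ((1 - P)ᵀ * A * (1 - P)) * Q = ((1 - P) * Q)ᵀ * A * ((1 - P) * Q) := by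
        simp only [transpose_mul, Matrix.mul_assoc]
    _ = Qᵀ * A * Q := by rw [hQ]

end Matrix

theorem stmt_11_general {n : ℕ} (A P E Pr : Matrix (Fin n) (Fin n) ℝ)
    (hA : A.PosSemidef) (hPrs : Prᵀ = Pr) (hPPr : P * Pr = 0)
    (hker : ∀ x : Fin n → ℝ,
      A.mulVec (Pr.mulVec x) = 0 → (1 - E).mulVec (Pr.mulVec x) = 0) :
    ∀ x : Fin n → ℝ,
      (Pr * ((1 - P)ᵀ * A * (1 - P)) * Pr).mulVec x = 0 →
      (Pr * (1 - E)ᵀ * ((1 - P)ᵀ * A * (1 - P)) * (1 - E) * Pr).mulVec x = 0 := by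
  intro x hx
  have hS : Pr * ((1 - P)ᵀ * A * (1 - P)) * Pr = Prᴴ * A * Pr := by
    rw [conjTranspose_eq_transpose_of_trivial,
      ← transpose_mul_congr_one_sub_mul_of_mul_eq_zero A hPPr, hPrs]
  have hAPr : A *ᵥ (Pr *ᵥ x) = 0 :=
    hA.mulVec_mulVec_eq_zero_of_conjTranspose_mul_mul_mulVec_eq_zero (hS ▸ hx)
  rw [← mulVec_mulVec, ← mulVec_mulVec, hker x hAPr, mulVec_zero]

/-- The nullspace inclusion (equation (36)): with `S = (I-P)ᵀ A (I-P)`,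
`null (Π S Π) ⊆ null (Π (I-E)ᵀ S (I-E) Π)` under Assumption 7
(`A Π x = 0 ⟹ (I-E) Π x = 0`). -/
theorem stmt_11 {n : ℕ} (A P E Pr : Matrix (Fin n) (Fin n) ℝ)
    (hA : A.PosSemidef) (hPrs : Prᵀ = Pr) (hPr2 : Pr * Pr = Pr) (hPPr : P * Pr = 0)
    (hker : ∀ x : Fin n → ℝ,
      A.mulVec (Pr.mulVec x) = 0 → (1 - E).mulVec (Pr.mulVec x) = 0) :
    ∀ x : Fin n → ℝ,
      (Pr * ((1 - P)ᵀ * A * (1 - P)) * Pr).mulVec x = 0 →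
      (Pr * (1 - E)ᵀ * ((1 - P)ᵀ * A * (1 - P)) * (1 - E) * Pr).mulVec x = 0 :=
  stmt_11_general A P E Pr hA hPrs hPPr hker
end

section
/- Let A be a symmetric n×n real matrix, let D be an m×n real matrix with D Dᵀ invertible, let Π = I − Dᵀ (D Dᵀ)⁻¹ D, and let b ∈ ℝⁿ. Then for any w ∈ ℝⁿ with D w = 0, the following are equivalent: (i) there exists λ ∈ ℝᵐ such that A w + Dᵀ λ = b; (ii) Π A Π w = Π b. -/
/-!
When `DDᵀ` is invertible, `Π = I - Dᵀ(DDᵀ)⁻¹D` fixes `ker D` and its kernel is exactly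
`range Dᵀ`. Hence for `Dw = 0` the saddle point system is solvable iff `b - Aw ∈ range Dᵀ`,
iff `Π(b - Aw) = 0`, iff `ΠAΠw = Πb`.
-/

open Matrix

section NullProj

variable {K m n : Type*} [Field K] [Fintype m] [Fintype n] [DecidableEq m] [DecidableEq n]

noncomputable def nullProj (D : Matrix m n K) : Matrix n n K := 1 - Dᵀ * (D * Dᵀ)⁻¹ * D

theorem nullProj_mul_transpose {D : Matrix m n K} (hD : IsUnit (D * Dᵀ)) :
    nullProj D * Dᵀ = 0 := by
  rw [nullProj, Matrix.sub_mul, Matrix.one_mul, Matrix.mul_assoc _ D, Matrix.mul_assoc,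
    nonsing_inv_mul _ ((isUnit_iff_isUnit_det _).mp hD), Matrix.mul_one, sub_self]

theorem nullProj_mulVec_of_mulVec_eq_zero {D : Matrix m n K} {w : n → K} (hw : D *ᵥ w = 0) :
    nullProj D *ᵥ w = w := by
  rw [nullProj, sub_mulVec, one_mulVec, ← mulVec_mulVec, hw, mulVec_zero, sub_zero]

theorem nullProj_mulVec_eq_zero_iff {D : Matrix m n K} (hD : IsUnit (D * Dᵀ)) (v : n → K) :
    nullProj D *ᵥ v = 0 ↔ ∃ lam : m → K, Dᵀ *ᵥ lam = v := by
  constructor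
  · intro hv
    refine ⟨((D * Dᵀ)⁻¹ * D) *ᵥ v, ?_⟩
    rw [nullProj, sub_mulVec, one_mulVec, sub_eq_zero] at hv
    rw [mulVec_mulVec, ← Matrix.mul_assoc, ← hv]
  · rintro ⟨lam, rfl⟩
    rw [mulVec_mulVec, nullProj_mul_transpose hD, zero_mulVec]

end NullProj

theorem stmt_14_general {m n : ℕ} (A : Matrix (Fin n) (Fin n) ℝ)
    (D : Matrix (Fin m) (Fin n) ℝ) (hD : IsUnit (D * Dᵀ))
    (b w : Fin n → ℝ) (hw : D.mulVec w = 0) :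
    (∃ lam : Fin m → ℝ, A.mulVec w + Dᵀ.mulVec lam = b) ↔
    ((1 - Dᵀ * (D * Dᵀ)⁻¹ * D) * A * (1 - Dᵀ * (D * Dᵀ)⁻¹ * D)).mulVec w
      = (1 - Dᵀ * (D * Dᵀ)⁻¹ * D).mulVec b := by
  calc (∃ lam : Fin m → ℝ, A *ᵥ w + Dᵀ *ᵥ lam = b)
      ↔ ∃ lam : Fin m → ℝ, Dᵀ *ᵥ lam = b - A *ᵥ w := by simp only [eq_sub_iff_add_eq']
    _ ↔ nullProj D *ᵥ (b - A *ᵥ w) = 0 := (nullProj_mulVec_eq_zero_iff hD _).symm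
    _ ↔ (nullProj D * A * nullProj D) *ᵥ w = nullProj D *ᵥ b := by
      rw [← mulVec_mulVec, ← mulVec_mulVec, nullProj_mulVec_of_mulVec_eq_zero hw, mulVec_sub,
        sub_eq_zero, eq_comm]

/-- Equation (42): for `w` in the nullspace of `D`, the saddle point system
`A w + Dᵀ λ = b` is solvable iff the projected system `Π A Π w = Π b` holds,
where `Π = I - Dᵀ(DDᵀ)⁻¹D`. -/
theorem stmt_14 {m n : ℕ} (A : Matrix (Fin n) (Fin n) ℝ) (hA : A.IsSymm)
    (D : Matrix (Fin m) (Fin n) ℝ) (hD : IsUnit (D * Dᵀ))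
    (b w : Fin n → ℝ) (hw : D.mulVec w = 0) :
    (∃ lam : Fin m → ℝ, A.mulVec w + Dᵀ.mulVec lam = b) ↔
    ((1 - Dᵀ * (D * Dᵀ)⁻¹ * D) * A * (1 - Dᵀ * (D * Dᵀ)⁻¹ * D)).mulVec w
      = (1 - Dᵀ * (D * Dᵀ)⁻¹ * D).mulVec b :=
  stmt_14_general A D hD b w hw
end

section
/- Let A be an n×n symmetric real matrix, let Π be an n×n real matrix with Π² = Π and Πᵀ = Π, let t > 0, and let b ∈ ℝⁿ. Then for every w ∈ ℝⁿ, the equation (Π A Π + t (I − Π)) w = Π b holds if and only if Π w = w and Π A Π w = Π b. -/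
open Matrix

section Regularization

variable {ι R : Type*} [Fintype ι] [DecidableEq ι] [CommRing R] [NoZeroDivisors R]
  {P B : Matrix ι ι R}

/-- Applying `P` kills the regularizing term `t (1 - P)`, recovering `B w = P b`; the
remaining equation `t (1 - P) w = 0` then forces `w` into the range of `P`. -/
theorem IsIdempotentElem.add_smul_one_sub_mulVec_eq_iff (hP : IsIdempotentElem P)
    (hPB : P * B = B) {t : R} (ht : t ≠ 0) (b w : ι → R) :
    (B + t • (1 - P)) *ᵥ w = P *ᵥ b ↔ P *ᵥ w = w ∧ B *ᵥ w = P *ᵥ b := by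
  constructor
  · intro h
    have hB : B *ᵥ w = P *ᵥ b := by
      have hP_reg : P * (B + t • (1 - P)) = B := by
        rw [Matrix.mul_add, Matrix.mul_smul, hP.mul_one_sub_self, smul_zero, add_zero, hPB]
      rw [← hP_reg, ← mulVec_mulVec, h, mulVec_mulVec, hP.eq]
    have hker : t • ((1 - P) *ᵥ w) = 0 := by
      rwa [add_mulVec, hB, smul_mulVec, add_eq_left] at h
    have hfix : (1 - P) *ᵥ w = 0 := (smul_eq_zero.mp hker).resolve_left ht
    rw [sub_mulVec, one_mulVec, sub_eq_zero] at hfix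
    exact ⟨hfix.symm, hB⟩
  · rintro ⟨hw, hB⟩
    rw [add_mulVec, hB, smul_mulVec, sub_mulVec, one_mulVec, hw, sub_self, smul_zero, add_zero]

end Regularization

theorem stmt_16_general {n : ℕ} (A Pr : Matrix (Fin n) (Fin n) ℝ)
    (hPr2 : Pr * Pr = Pr)
    (t : ℝ) (ht : 0 < t) (b : Fin n → ℝ) :
    ∀ w : Fin n → ℝ,
      (Pr * A * Pr + t • (1 - Pr)).mulVec w = Pr.mulVec b ↔
      (Pr.mulVec w = w ∧ (Pr * A * Pr).mulVec w = Pr.mulVec b) := by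
  have hPr : IsIdempotentElem Pr := hPr2
  exact hPr.add_smul_one_sub_mulVec_eq_iff (by rw [← mul_assoc, ← mul_assoc, hPr2]) ht.ne' b

/-- Equivalence of the regularized system (43) and the projected singular
system (42): `(Π A Π + t(I - Π)) w = Π b` iff `Π w = w` and `Π A Π w = Π b`. -/
theorem stmt_16 {n : ℕ} (A Pr : Matrix (Fin n) (Fin n) ℝ)
    (hA : A.IsSymm) (hPr2 : Pr * Pr = Pr) (hPrs : Prᵀ = Pr)
    (t : ℝ) (ht : 0 < t) (b : Fin n → ℝ) :
    ∀ w : Fin n → ℝ,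
      (Pr * A * Pr + t • (1 - Pr)).mulVec w = Pr.mulVec b ↔
      (Pr.mulVec w = w ∧ (Pr * A * Pr).mulVec w = Pr.mulVec b) :=
  stmt_16_general A Pr hPr2 t ht b
end
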